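/- arXiv:1010.3385 — 2 statements merged into one kernel-verified Lean document; each statement's English description precedes it below -/
import Mathlib

section
/- In the CDO D^{ch} on ℙ¹ glued from D^{ch}_{ℂ₀} and D^{ch}_{ℂ_∞} via x ↦ 1/y, ∂_x ↦ −(∂_y)₍₋₁₎(y²) − 2∂(y), the assignment e ↦ ∂_x, h ↦ −2(∂_x)₍₋₁₎x, f ↦ −(∂_x)₍₋₁₎x² − 2∂(x) satisfies the λ-bracket/OPE relations of the affine vertex algebra V_{−2}(sl₂): e₍₀₎f = h, h₍₀₎e = 2e, h₍₀₎f = −2f, e₍₁₎f = −2, h₍₁₎h = −4, e₍₁₎e = f₍₁₎f = 0. -/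
/-!
The generators `x`, `∂ₓ` have at most simple poles with each other (`x₍₀₎∂ₓ = -|0⟩` by
skew-symmetry), and for such OPEs the Borcherds identity collapses to Wick-type rules:
`a₍ₘ₎` commutes past `b₍ₖ₎` up to `(a₍₀₎b)₍ₘ₊ₖ₎`, and `(a₍₋₁₎b)₍ₖ₎c` keeps only the two single
contractions. Propagating these rules through `x²`, `x∂ₓ = (∂ₓ)₍₋₁₎x`, `x²∂ₓ = (∂ₓ)₍₋₁₎x²` and `∂x`
gives every product needed. The one delicate relation is `f₍₁₎f = 0`: the term
`(x²∂ₓ)₍₁₎(x²∂ₓ) = -4x²` is cancelled exactly by the cross terms of the correction `-2∂x`, since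
`(x²∂ₓ)₍₁₎∂x = (∂x)₍₁₎(x²∂ₓ) = x²`.
-/

/-- Generalized binomial coefficient `C(m, j)` for an integer `m` and natural `j`. -/
def zchoose (m : ℤ) (j : ℕ) : ℤ := (∏ i ∈ Finset.range j, (m - i)) / (j.factorial : ℤ)

/-- A (ℤ-graded-style) vertex algebra over `ℂ`: a vector space with `n`-th products
`a ₍ₙ₎ b`, a vacuum vector satisfying the vacuum axioms, locality (fields), and the
Borcherds identity. -/
structure VertexAlgebraC (V : Type*) [AddCommGroup V] [Module ℂ V] where
  nprod : V → ℤ → V → V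
  vac : V
  nprod_add_left : ∀ a n b c, nprod (a + b) n c = nprod a n c + nprod b n c
  nprod_add_right : ∀ a n b c, nprod a n (b + c) = nprod a n b + nprod a n c
  nprod_smul_left : ∀ (r : ℂ) a n b, nprod (r • a) n b = r • nprod a n b
  nprod_smul_right : ∀ (r : ℂ) a n b, nprod a n (r • b) = r • nprod a n b
  locality : ∀ a b, ∃ N : ℕ, ∀ n : ℤ, (N : ℤ) ≤ n → nprod a n b = 0
  vac_prod : ∀ (n : ℤ) (a : V), nprod vac n a = if n = -1 then a else 0
  prod_vac_neg_one : ∀ a, nprod a (-1) vac = a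
  prod_vac_nonneg : ∀ (a : V) (n : ℤ), 0 ≤ n → nprod a n vac = 0
  borcherds : ∀ (a b c : V) (m n k : ℤ),
    (∑ᶠ j : ℕ, zchoose m j • nprod (nprod a (n + j) b) (m + k - j) c)
      = ∑ᶠ j : ℕ, ((-1 : ℤ) ^ j * zchoose n j) •
          (nprod a (m + n - j) (nprod b (k + j) c)
            - (Int.negOnePow n : ℤ) • nprod b (n + k - j) (nprod a (m + j) c))

/-- The translation operator `∂a = a₍₋₂₎|0⟩` of a vertex algebra. -/
def VertexAlgebraC.tr {V : Type*} [AddCommGroup V] [Module ℂ V]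
    (W : VertexAlgebraC V) (a : V) : V := W.nprod a (-2) W.vac

lemma zchoose_zero (m : ℤ) : zchoose m 0 = 1 := by simp [zchoose]

lemma zero_zchoose {j : ℕ} (hj : j ≠ 0) : zchoose 0 j = 0 := by
  rw [zchoose, Finset.prod_eq_zero (Finset.mem_range.2 (Nat.pos_of_ne_zero hj)) (by simp),
    Int.zero_ediv]

namespace VertexAlgebraC

variable {V : Type*} [AddCommGroup V] [Module ℂ V] (W : VertexAlgebraC V)

def nprodLeft (n : ℤ) (c : V) : V →ₗ[ℂ] V where
  toFun a := W.nprod a n c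
  map_add' a b := W.nprod_add_left a n b c
  map_smul' r a := W.nprod_smul_left r a n c

def nprodRight (a : V) (n : ℤ) : V →ₗ[ℂ] V where
  toFun := W.nprod a n
  map_add' := W.nprod_add_right a n
  map_smul' r := W.nprod_smul_right r a n

attribute [simp] nprod_add_left nprod_add_right nprod_smul_left nprod_smul_right
  prod_vac_neg_one

@[simp]
lemma nprod_zero_left (n : ℤ) (c : V) : W.nprod 0 n c = 0 := (W.nprodLeft n c).map_zero

@[simp]
lemma nprod_zero_right (a : V) (n : ℤ) : W.nprod a n 0 = 0 := (W.nprodRight a n).map_zero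

@[simp]
lemma nprod_neg_left (a : V) (n : ℤ) (c : V) : W.nprod (-a) n c = -W.nprod a n c :=
  (W.nprodLeft n c).map_neg a

@[simp]
lemma nprod_neg_right (a : V) (n : ℤ) (b : V) : W.nprod a n (-b) = -W.nprod a n b :=
  (W.nprodRight a n).map_neg b

@[simp]
lemma nprod_sub_left (a b : V) (n : ℤ) (c : V) :
    W.nprod (a - b) n c = W.nprod a n c - W.nprod b n c :=
  (W.nprodLeft n c).map_sub a b

@[simp]
lemma nprod_sub_right (a : V) (n : ℤ) (b c : V) :
    W.nprod a n (b - c) = W.nprod a n b - W.nprod a n c :=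
  (W.nprodRight a n).map_sub b c

lemma vac_nprod_of_ne (c : V) {n : ℤ} (hn : n ≠ -1) : W.nprod W.vac n c = 0 := by
  rw [W.vac_prod, if_neg hn]

@[simp]
lemma vac_nprod_neg_one (c : V) : W.nprod W.vac (-1) c = c := by
  rw [W.vac_prod, if_pos rfl]

lemma tr_nprod_one (a c : V) : W.nprod (W.tr a) 1 c = -W.nprod a 0 c := by
  have hB := W.borcherds a W.vac c 0 (-2) 1
  rw [finsum_eq_single _ 0 fun j hj => ?lhs, finsum_eq_single _ 0 fun j hj => ?rhs] at hB
  case lhs => rw [zero_zchoose hj, zero_smul]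
  case rhs =>
    rw [W.vac_nprod_of_ne _ (by omega), W.vac_nprod_of_ne _ (by omega)]
    simp
  simpa [zchoose_zero, tr, W.vac_nprod_of_ne c (show (1 : ℤ) ≠ -1 by decide),
    Int.negOnePow_even 2 ⟨1, rfl⟩] using hB

/-- The OPE `a(z)b(w) ∼ v(w)/(z - w)`. -/
structure SimplePoleOPE (a b v : V) : Prop where
  nprod_zero : W.nprod a 0 b = v
  nprod_eq_zero : ∀ n : ℤ, 1 ≤ n → W.nprod a n b = 0

lemma simplePoleOPE_zero_iff {a b : V} :
    W.SimplePoleOPE a b 0 ↔ ∀ n : ℤ, 0 ≤ n → W.nprod a n b = 0 := by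
  refine ⟨fun h n hn => ?_, fun h => ⟨h 0 le_rfl, fun n hn => h n (by omega)⟩⟩
  rcases hn.eq_or_lt with rfl | hn
  exacts [h.nprod_zero, h.nprod_eq_zero n hn]

namespace SimplePoleOPE

variable {W} {a b c u v w : V}

lemma zero_left (c : V) : W.SimplePoleOPE 0 c 0 :=
  (W.simplePoleOPE_zero_iff).2 fun n _ => W.nprod_zero_left n c

lemma zero_right (a : V) : W.SimplePoleOPE a 0 0 :=
  (W.simplePoleOPE_zero_iff).2 fun n _ => W.nprod_zero_right a n

lemma vac_left (c : V) : W.SimplePoleOPE W.vac c 0 :=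
  (W.simplePoleOPE_zero_iff).2 fun _ hn => W.vac_nprod_of_ne c (by omega)

lemma vac_right (a : V) : W.SimplePoleOPE a W.vac 0 :=
  (W.simplePoleOPE_zero_iff).2 fun n hn => W.prod_vac_nonneg a n hn

lemma neg_left (h : W.SimplePoleOPE a b v) : W.SimplePoleOPE (-a) b (-v) :=
  ⟨by simp [h.nprod_zero], fun n hn => by simp [h.nprod_eq_zero n hn]⟩

lemma neg_right (h : W.SimplePoleOPE a b v) : W.SimplePoleOPE a (-b) (-v) :=
  ⟨by simp [h.nprod_zero], fun n hn => by simp [h.nprod_eq_zero n hn]⟩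

lemma nprod_comm (h : W.SimplePoleOPE a b v) (c : V) (m k : ℤ) :
    W.nprod a m (W.nprod b k c) = W.nprod b k (W.nprod a m c) + W.nprod v (m + k) c := by
  have hB := W.borcherds a b c m 0 k
  rw [finsum_eq_single _ 0 fun j hj => ?lhs, finsum_eq_single _ 0 fun j hj => ?rhs] at hB
  case lhs => rw [h.nprod_eq_zero _ (by omega), nprod_zero_left, smul_zero]
  case rhs => rw [zero_zchoose hj, mul_zero, zero_smul]
  simp only [zchoose_zero, Nat.cast_zero, add_zero, sub_zero, zero_add, one_smul, pow_zero,
    one_mul, Int.negOnePow_zero, Units.val_one, h.nprod_zero] at hB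
  rw [hB, add_sub_cancel]

lemma swap (h : W.SimplePoleOPE a b v) : W.SimplePoleOPE b a (-v) := by
  have key : ∀ n : ℤ, 0 ≤ n → W.nprod a n b = -((Int.negOnePow n : ℤ) • W.nprod b n a) := by
    intro n hn
    have hB := W.borcherds a b W.vac (-1) n 0
    rw [finsum_eq_single _ 0 fun j hj => ?lhs, finsum_eq_single _ 0 fun j hj => ?rhs] at hB
    case lhs => rw [h.nprod_eq_zero _ (by omega), nprod_zero_left, smul_zero]
    case rhs =>
      rw [W.prod_vac_nonneg b _ (by omega), W.prod_vac_nonneg a _ (by omega)]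
      simp
    simpa [zchoose_zero, W.prod_vac_nonneg b 0 le_rfl] using hB
  refine ⟨?_, fun n hn => ?_⟩
  · simpa [h.nprod_zero] using (congrArg Neg.neg (key 0 le_rfl)).symm
  · have hn' := key n (by omega)
    rw [h.nprod_eq_zero n hn] at hn'
    rcases Int.units_eq_one_or n.negOnePow with hu | hu <;> simpa [hu] using hn'.symm

lemma nprod_neg_one_left_nprod (hac : W.SimplePoleOPE a c u) (hbc : W.SimplePoleOPE b c w)
    {k : ℤ} (hk : 0 ≤ k) :
    W.nprod (W.nprod a (-1) b) k c = W.nprod a (-1) (W.nprod b k c) + W.nprod b (k - 1) u := by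
  have hB := W.borcherds a b c 0 (-1) k
  rw [finsum_eq_single _ 0 fun j hj => ?lhs, finsum_eq_single _ 0 fun j hj => ?rhs] at hB
  case lhs => rw [zero_zchoose hj, zero_smul]
  case rhs =>
    rw [hbc.nprod_eq_zero _ (by omega), hac.nprod_eq_zero _ (by omega)]
    simp
  simpa [zchoose_zero, hac.nprod_zero, sub_eq_add_neg, add_comm] using hB

lemma nprod_neg_one_left_nprod_zero (hac : W.SimplePoleOPE a c u)
    (hbc : W.SimplePoleOPE b c w) :
    W.nprod (W.nprod a (-1) b) 0 c = W.nprod a (-1) w + W.nprod b (-1) u := by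
  simpa [hbc.nprod_zero] using hac.nprod_neg_one_left_nprod hbc le_rfl

lemma nprod_neg_one_left_nprod_of_one_le (hac : W.SimplePoleOPE a c u)
    (hbc : W.SimplePoleOPE b c w) {k : ℤ} (hk : 1 ≤ k) :
    W.nprod (W.nprod a (-1) b) k c = W.nprod b (k - 1) u := by
  simpa [hbc.nprod_eq_zero k hk] using hac.nprod_neg_one_left_nprod hbc (by omega : 0 ≤ k)

lemma nprod_neg_one_left (hac : W.SimplePoleOPE a c u) (hbc : W.SimplePoleOPE b c w)
    (hbu : W.SimplePoleOPE b u 0) :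
    W.SimplePoleOPE (W.nprod a (-1) b) c (W.nprod a (-1) w + W.nprod b (-1) u) :=
  ⟨hac.nprod_neg_one_left_nprod_zero hbc, fun k hk => by
    rw [hac.nprod_neg_one_left_nprod_of_one_le hbc hk,
      (W.simplePoleOPE_zero_iff.1 hbu) _ (by omega)]⟩

lemma nprod_neg_one_right (hab : W.SimplePoleOPE a b v) (hac : W.SimplePoleOPE a c u)
    (hvc : W.SimplePoleOPE v c 0) :
    W.SimplePoleOPE a (W.nprod b (-1) c) (W.nprod b (-1) u + W.nprod v (-1) c) := by
  refine ⟨by rw [hab.nprod_comm, hac.nprod_zero, zero_add], fun m hm => ?_⟩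
  rw [hab.nprod_comm, hac.nprod_eq_zero m hm, (W.simplePoleOPE_zero_iff.1 hvc) _ (by omega),
    nprod_zero_right, add_zero]

lemma nprod_tr (hab : W.SimplePoleOPE a b v) {m : ℤ} (hm : 0 ≤ m) :
    W.nprod a m (W.tr b) = W.nprod v (m - 2) W.vac := by
  rw [tr, hab.nprod_comm, W.prod_vac_nonneg a m hm, nprod_zero_right, zero_add, sub_eq_add_neg]

lemma nprod_zero_tr (hab : W.SimplePoleOPE a b v) : W.nprod a 0 (W.tr b) = W.tr v :=
  hab.nprod_tr le_rfl

lemma nprod_one_tr (hab : W.SimplePoleOPE a b v) : W.nprod a 1 (W.tr b) = v := by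
  simpa using hab.nprod_tr zero_le_one

end SimplePoleOPE

@[simp]
lemma tr_vac : W.tr W.vac = 0 := W.vac_nprod_of_ne _ (by decide)

@[simp]
lemma tr_zero : W.tr 0 = 0 := W.nprod_zero_left _ _

structure IsBetaGammaPair (x Dx : V) : Prop where
  Dx_x : W.SimplePoleOPE Dx x W.vac
  x_x : W.SimplePoleOPE x x 0
  Dx_Dx : W.SimplePoleOPE Dx Dx 0

namespace IsBetaGammaPair

variable {W} {x Dx : V}

-- `sq`, `euler`, `quad` in lemma names stand for `x²`, `x∂ₓ`, `x²∂ₓ`, the fields attached to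
-- the function `x²` and the vector fields `x∂ₓ`, `x²∂ₓ`.
local notation "x²" => W.nprod x (-1) x
local notation "x∂ₓ" => W.nprod Dx (-1) x
local notation "x²∂ₓ" => W.nprod Dx (-1) x²

lemma x_Dx (hP : W.IsBetaGammaPair x Dx) : W.SimplePoleOPE x Dx (-W.vac) := hP.Dx_x.swap

lemma x_sq (hP : W.IsBetaGammaPair x Dx) : W.SimplePoleOPE x x² 0 := by
  simpa using hP.x_x.nprod_neg_one_right hP.x_x (.zero_left x)

lemma Dx_sq (hP : W.IsBetaGammaPair x Dx) : W.SimplePoleOPE Dx x² ((2 : ℂ) • x) := by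
  simpa [two_smul] using hP.Dx_x.nprod_neg_one_right hP.Dx_x (.vac_left x)

lemma x_euler (hP : W.IsBetaGammaPair x Dx) : W.SimplePoleOPE x x∂ₓ (-x) := by
  simpa using hP.x_Dx.nprod_neg_one_right hP.x_x
    (by simpa using (SimplePoleOPE.vac_left x).neg_left)

lemma Dx_euler (hP : W.IsBetaGammaPair x Dx) : W.SimplePoleOPE Dx x∂ₓ Dx := by
  simpa using hP.Dx_Dx.nprod_neg_one_right hP.Dx_x (.zero_left x)

lemma x_quad (hP : W.IsBetaGammaPair x Dx) : W.SimplePoleOPE x x²∂ₓ (-x²) := by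
  simpa using hP.x_Dx.nprod_neg_one_right hP.x_sq
    (by simpa using (SimplePoleOPE.vac_left x²).neg_left)

lemma Dx_quad (hP : W.IsBetaGammaPair x Dx) : W.SimplePoleOPE Dx x²∂ₓ ((2 : ℂ) • x∂ₓ) := by
  simpa using hP.Dx_Dx.nprod_neg_one_right hP.Dx_sq (.zero_left x²)

lemma sq_x (hP : W.IsBetaGammaPair x Dx) : W.SimplePoleOPE x² x 0 := by
  simpa using hP.x_x.nprod_neg_one_left hP.x_x (.zero_right x)

lemma euler_x (hP : W.IsBetaGammaPair x Dx) : W.SimplePoleOPE x∂ₓ x x := by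
  simpa using hP.Dx_x.nprod_neg_one_left hP.x_x (.vac_right x)

lemma quad_x (hP : W.IsBetaGammaPair x Dx) : W.SimplePoleOPE x²∂ₓ x x² := by
  simpa using hP.Dx_x.nprod_neg_one_left hP.sq_x (.vac_right x²)

lemma sq_quad (hP : W.IsBetaGammaPair x Dx) :
    W.SimplePoleOPE x² x²∂ₓ (-W.nprod x (-1) x² + -W.nprod x (-1) x²) := by
  simpa using hP.x_quad.nprod_neg_one_left hP.x_quad
    (by simpa using hP.x_sq.neg_right)

lemma euler_zero_Dx (hP : W.IsBetaGammaPair x Dx) : W.nprod x∂ₓ 0 Dx = -Dx := by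
  simpa using hP.Dx_Dx.nprod_neg_one_left_nprod_zero hP.x_Dx

lemma sq_zero_euler (hP : W.IsBetaGammaPair x Dx) : W.nprod x² 0 x∂ₓ = (-2 : ℂ) • x² := by
  simpa [two_smul] using hP.x_euler.nprod_neg_one_left_nprod_zero hP.x_euler

lemma x_neg_one_euler (hP : W.IsBetaGammaPair x Dx) : W.nprod x (-1) x∂ₓ = x²∂ₓ := by
  simpa [W.vac_nprod_of_ne x (show (-2 : ℤ) ≠ -1 by decide)] using hP.x_Dx.nprod_comm x (-1) (-1)

lemma euler_zero_quad (hP : W.IsBetaGammaPair x Dx) : W.nprod x∂ₓ 0 x²∂ₓ = x²∂ₓ := by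
  rw [hP.Dx_quad.nprod_neg_one_left_nprod_zero hP.x_quad]
  simp only [hP.x_neg_one_euler, nprod_neg_right, nprod_smul_right]
  module

lemma euler_one_euler (hP : W.IsBetaGammaPair x Dx) : W.nprod x∂ₓ 1 x∂ₓ = -W.vac := by
  simpa [hP.x_Dx.nprod_zero] using
    hP.Dx_euler.nprod_neg_one_left_nprod_of_one_le hP.x_euler le_rfl

lemma quad_one_quad (hP : W.IsBetaGammaPair x Dx) :
    W.nprod x²∂ₓ 1 x²∂ₓ = (-4 : ℂ) • x² := by
  rw [hP.Dx_quad.nprod_neg_one_left_nprod_of_one_le hP.sq_quad le_rfl]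
  simp only [sub_self, nprod_smul_right, hP.sq_zero_euler, smul_smul]
  norm_num

end IsBetaGammaPair

end VertexAlgebraC

/-- In the CDO `D^{ch}` on `ℙ¹` (whose local model is the beta-gamma system: fields
`x`, `∂_x` with `(∂_x)₍₀₎x = |0⟩`, `x₍ₙ₎x = 0` and `(∂_x)₍ₙ₎(∂_x) = 0` for `n ≥ 0`,
`(∂_x)₍ₙ₎x = 0` for `n ≥ 1`), the assignment `e ↦ ∂_x`, `h ↦ −2(∂_x)₍₋₁₎x`,
`f ↦ −(∂_x)₍₋₁₎x² − 2∂(x)` satisfies the OPE relations of the affine vertex algebra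
`V_{−2}(sl₂)`: `e₍₀₎f = h`, `h₍₀₎e = 2e`, `h₍₀₎f = −2f`, `e₍₁₎f = −2`, `h₍₁₎h = −4`,
`e₍₁₎e = f₍₁₎f = 0`. -/
theorem cdo_P1_sl2_critical {V : Type*} [AddCommGroup V] [Module ℂ V]
    (W : VertexAlgebraC V) (x Dx : V)
    (hbg0 : W.nprod Dx 0 x = W.vac)
    (hbgx : ∀ n : ℤ, 0 ≤ n → W.nprod x n x = 0)
    (hbgD : ∀ n : ℤ, 0 ≤ n → W.nprod Dx n Dx = 0)
    (hbg1 : ∀ n : ℤ, 1 ≤ n → W.nprod Dx n x = 0) :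
    let e := Dx
    let h := (-2 : ℂ) • W.nprod Dx (-1) x
    let f := - W.nprod Dx (-1) (W.nprod x (-1) x) - (2 : ℂ) • W.tr x
    W.nprod e 0 f = h ∧
    W.nprod h 0 e = (2 : ℂ) • e ∧
    W.nprod h 0 f = (-2 : ℂ) • f ∧
    W.nprod e 1 f = (-2 : ℂ) • W.vac ∧
    W.nprod h 1 h = (-4 : ℂ) • W.vac ∧
    W.nprod e 1 e = 0 ∧
    W.nprod f 1 f = 0 := by
  intro e h f
  have hP : W.IsBetaGammaPair x Dx :=
    ⟨⟨hbg0, hbg1⟩, W.simplePoleOPE_zero_iff.2 hbgx, W.simplePoleOPE_zero_iff.2 hbgD⟩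
  refine ⟨?_, ?_, ?_, ?_, ?_, hP.Dx_Dx.nprod_eq_zero 1 le_rfl, ?_⟩
  · simp [e, h, f, hP.Dx_quad.nprod_zero, hP.Dx_x.nprod_zero_tr]
  · simp [e, h, hP.euler_zero_Dx]
  · simp [h, f, hP.euler_zero_quad, hP.euler_x.nprod_zero_tr]
    module
  · simp [e, f, hP.Dx_quad.nprod_eq_zero 1 le_rfl, hP.Dx_x.nprod_one_tr]
  · simp [h, hP.euler_one_euler]
    module
  · simp [f, hP.quad_one_quad, hP.quad_x.nprod_one_tr, W.tr_nprod_one, hP.x_quad.nprod_zero,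
      hP.x_x.nprod_zero_tr]
    module
end

section
/- On ℙ¹ with the gluing λ* ↦ λ* + k·dx/x of the sheaf g̃ (extension 0 → Ω¹_{ℙ¹} → g̃ → O_{ℙ¹}·λ* → 0), k ≠ 0: the connecting map H⁰(ℙ¹, O·λ*) → H¹(ℙ¹, Ω¹_{ℙ¹}) in the long exact cohomology sequence is an isomorphism, and consequently Hⁱ(ℙ¹, g̃) = 0 for all i; hence the anchor induces an isomorphism H⁰(ℙ¹, A^{tw}) ≅ H⁰(ℙ¹, T_{ℙ¹}) for the extension 0 → g̃ → A^{tw} → T_{ℙ¹} → 0. -/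
/-!
Under the identifications `H⁰(O·λ*) ≅ ℂ ≅ H¹(Ω¹)` the connecting map is multiplication by
`k ≠ 0`, hence an isomorphism. In the long exact sequence of `0 → Ω¹ → g̃ → O·λ* → 0`,
`H⁰(g̃)` then sits between `H⁰(Ω¹) = 0` and an injective map, and `H¹(g̃)` between a
surjective map and `H¹(O·λ*) = 0`, so both vanish. The sequence of
`0 → g̃ → A^{tw} → T → 0` then has zero terms on both sides of the anchor `H⁰(A^{tw}) → H⁰(T)`.
-/

namespace Function.Exact

variable {R M N P Q : Type*} [Ring R] [AddCommGroup M] [AddCommGroup N] [AddCommGroup P]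
  [AddCommGroup Q] [Module R M] [Module R N] [Module R P] [Module R Q]
  {f : M →ₗ[R] N} {g : N →ₗ[R] P} {h : P →ₗ[R] Q}

lemma injective_of_subsingleton_left [Subsingleton M] (hfg : Exact f g) : Injective g :=
  (LinearMap.injective_iff_eq_zero_of_exact hfg).mpr (Subsingleton.elim _ _)

lemma surjective_of_subsingleton_right [Subsingleton P] (hfg : Exact f g) : Surjective f :=
  (LinearMap.surjective_iff_eq_zero_of_exact hfg).mpr (Subsingleton.elim _ _)

lemma subsingleton_of_subsingleton_of_injective [Subsingleton M] (hfg : Exact f g)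
    (hgh : Exact g h) (hh : Injective h) : Subsingleton N := by
  have hg : Injective g := hfg.injective_of_subsingleton_left
  have hg_zero : g = 0 := (LinearMap.injective_iff_eq_zero_of_exact hgh).mp hh
  exact ⟨fun x y ↦ hg (by simp [hg_zero])⟩

lemma subsingleton_of_surjective_of_subsingleton [Subsingleton Q] (hfg : Exact f g)
    (hgh : Exact g h) (hf : Surjective f) : Subsingleton P := by
  have hg_zero : g = 0 := (LinearMap.surjective_iff_eq_zero_of_exact hfg).mp hf
  have hh : Injective h := (LinearMap.injective_iff_eq_zero_of_exact hgh).mpr hg_zero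
  exact hh.subsingleton

lemma bijective_of_subsingleton [Subsingleton M] [Subsingleton Q] (hfg : Exact f g)
    (hgh : Exact g h) : Bijective g :=
  ⟨hfg.injective_of_subsingleton_left, hgh.surjective_of_subsingleton_right⟩

end Function.Exact

lemma Function.bijective_of_linearEquiv_apply_eq_smul {K M N V : Type*} [Field K]
    [AddCommGroup M] [AddCommGroup N] [AddCommGroup V] [Module K M] [Module K N] [Module K V]
    (ιM : M ≃ₗ[K] V) (ιN : N ≃ₗ[K] V) {k : K} (hk : k ≠ 0) {f : M → N}
    (hf : ∀ x, ιN (f x) = k • ιM x) : Bijective f := by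
  have hf_eq : f = (ιM.trans (LinearEquiv.smulOfNeZero K V k hk)).trans ιN.symm := by
    ext x
    simp [← hf]
  exact hf_eq ▸ LinearEquiv.bijective _

theorem p1_deformed_tcdo_global_sections_general
    (k : ℂ) (hk : k ≠ 0)
    -- the cohomology spaces :
    (H0Ω H1Ω H0g H1g H0L H1L H0A H0T : Type*)
    [AddCommGroup H0Ω] [Module ℂ H0Ω] [AddCommGroup H1Ω] [Module ℂ H1Ω]
    [AddCommGroup H0g] [Module ℂ H0g] [AddCommGroup H1g] [Module ℂ H1g]
    [AddCommGroup H0L] [Module ℂ H0L] [AddCommGroup H1L] [Module ℂ H1L]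
    [AddCommGroup H0A] [Module ℂ H0A] [AddCommGroup H0T] [Module ℂ H0T]
    -- standard facts on ℙ¹: `H⁰(Ω¹) = 0`, `H¹(O·λ*) = H¹(O) ⊗ λ* = 0`,
    -- `H⁰(O·λ*) ≅ ℂ`, `H¹(Ω¹) ≅ ℂ` :
    (hH0Ω : Subsingleton H0Ω) (hH1L : Subsingleton H1L)
    (ιL : H0L ≃ₗ[ℂ] ℂ) (ιΩ : H1Ω ≃ₗ[ℂ] ℂ)
    -- the long exact sequence of `0 → Ω¹ → g̃ → O·λ* → 0` :
    (e₁ : H0Ω →ₗ[ℂ] H0g) (e₂ : H0g →ₗ[ℂ] H0L) (δ : H0L →ₗ[ℂ] H1Ω)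
    (e₃ : H1Ω →ₗ[ℂ] H1g) (e₄ : H1g →ₗ[ℂ] H1L)
    (hex₁ : Function.Exact e₁ e₂) (hex₂ : Function.Exact e₂ δ)
    (hex₃ : Function.Exact δ e₃) (hex₄ : Function.Exact e₃ e₄)
    -- the connecting map is multiplication by `k` (it sends `λ*` to `k·[dx/x]`) :
    (hδ : ∀ v : H0L, ιΩ (δ v) = k * ιL v)
    -- the long exact sequence of `0 → g̃ → A^{tw} → T → 0` in low degrees :
    (f₁ : H0g →ₗ[ℂ] H0A) (f₂ : H0A →ₗ[ℂ] H0T) (f₃ : H0T →ₗ[ℂ] H1g)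
    (hfex₁ : Function.Exact f₁ f₂) (hfex₂ : Function.Exact f₂ f₃) :
    -- the connecting map `H⁰(O·λ*) → H¹(Ω¹)` is an isomorphism ...
    Function.Bijective δ ∧
    -- ... consequently `H⁰(g̃) = H¹(g̃) = 0` ...
    Subsingleton H0g ∧ Subsingleton H1g ∧
    -- ... hence the anchor induces `H⁰(ℙ¹, A^{tw}) ≅ H⁰(ℙ¹, T_{ℙ¹})` :
    Function.Bijective f₂ := by
  have hδ_bij : Function.Bijective δ :=
    Function.bijective_of_linearEquiv_apply_eq_smul ιL ιΩ hk hδ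
  have hH0g : Subsingleton H0g := hex₁.subsingleton_of_subsingleton_of_injective hex₂ hδ_bij.1
  have hH1g : Subsingleton H1g := hex₃.subsingleton_of_surjective_of_subsingleton hex₄ hδ_bij.2
  exact ⟨hδ_bij, hH0g, hH1g, hfex₁.bijective_of_subsingleton hfex₂⟩

/-- Cohomology of the deformed twisted algebroid on `ℙ¹`.  The sheaf `g̃` is the
extension `0 → Ω¹_{ℙ¹} → g̃ → O_{ℙ¹}·λ* → 0` glued over `ℂ*` by `λ* ↦ λ* + k·dx/x` with
`k ≠ 0`.  The statement is phrased via the associated long exact cohomology sequences: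
`0 → H⁰(Ω¹) → H⁰(g̃) → H⁰(O·λ*) →(δ) H¹(Ω¹) → H¹(g̃) → H¹(O·λ*) → 0` where the connecting
map `δ` is multiplication by `k` under the identifications `H⁰(O·λ*) ≅ ℂ ≅ H¹(Ω¹)`
(it sends `λ*` to `k` times the class of `dx/x`), and
`0 → H⁰(g̃) → H⁰(A^{tw}) → H⁰(T_{ℙ¹}) → H¹(g̃)` for the extension
`0 → g̃ → A^{tw} → T_{ℙ¹} → 0`.  Using `H⁰(ℙ¹,Ω¹) = 0` and `H¹(ℙ¹,O) = 0`:
the connecting map `δ` is an isomorphism, consequently `Hⁱ(ℙ¹, g̃) = 0` for all `i`, and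
the anchor induces an isomorphism `H⁰(ℙ¹, A^{tw}) ≅ H⁰(ℙ¹, T_{ℙ¹})`. -/
theorem p1_deformed_tcdo_global_sections
    (k : ℂ) (hk : k ≠ 0)
    -- the cohomology spaces :
    (H0Ω H1Ω H0g H1g H0L H1L H0A H0T : Type*)
    [AddCommGroup H0Ω] [Module ℂ H0Ω] [AddCommGroup H1Ω] [Module ℂ H1Ω]
    [AddCommGroup H0g] [Module ℂ H0g] [AddCommGroup H1g] [Module ℂ H1g]
    [AddCommGroup H0L] [Module ℂ H0L] [AddCommGroup H1L] [Module ℂ H1L]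
    [AddCommGroup H0A] [Module ℂ H0A] [AddCommGroup H0T] [Module ℂ H0T]
    -- standard facts on ℙ¹: `H⁰(Ω¹) = 0`, `H¹(O·λ*) = H¹(O) ⊗ λ* = 0`,
    -- `H⁰(O·λ*) ≅ ℂ`, `H¹(Ω¹) ≅ ℂ` :
    (hH0Ω : Subsingleton H0Ω) (hH1L : Subsingleton H1L)
    (ιL : H0L ≃ₗ[ℂ] ℂ) (ιΩ : H1Ω ≃ₗ[ℂ] ℂ)
    -- the long exact sequence of `0 → Ω¹ → g̃ → O·λ* → 0` :
    (e₁ : H0Ω →ₗ[ℂ] H0g) (e₂ : H0g →ₗ[ℂ] H0L) (δ : H0L →ₗ[ℂ] H1Ω)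
    (e₃ : H1Ω →ₗ[ℂ] H1g) (e₄ : H1g →ₗ[ℂ] H1L)
    (he₁ : Function.Injective e₁)
    (hex₁ : Function.Exact e₁ e₂) (hex₂ : Function.Exact e₂ δ)
    (hex₃ : Function.Exact δ e₃) (hex₄ : Function.Exact e₃ e₄)
    (he₄ : Function.Surjective e₄)
    -- the connecting map is multiplication by `k` (it sends `λ*` to `k·[dx/x]`) :
    (hδ : ∀ v : H0L, ιΩ (δ v) = k * ιL v)
    -- the long exact sequence of `0 → g̃ → A^{tw} → T → 0` in low degrees :
    (f₁ : H0g →ₗ[ℂ] H0A) (f₂ : H0A →ₗ[ℂ] H0T) (f₃ : H0T →ₗ[ℂ] H1g)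
    (hf₁ : Function.Injective f₁)
    (hfex₁ : Function.Exact f₁ f₂) (hfex₂ : Function.Exact f₂ f₃) :
    -- the connecting map `H⁰(O·λ*) → H¹(Ω¹)` is an isomorphism ...
    Function.Bijective δ ∧
    -- ... consequently `H⁰(g̃) = H¹(g̃) = 0` ...
    Subsingleton H0g ∧ Subsingleton H1g ∧
    -- ... hence the anchor induces `H⁰(ℙ¹, A^{tw}) ≅ H⁰(ℙ¹, T_{ℙ¹})` :
    Function.Bijective f₂ :=
  p1_deformed_tcdo_global_sections_general k hk H0Ω H1Ω H0g H1g H0L H1L H0A H0T hH0Ω hH1L ιL ιΩ e₁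
    e₂ δ e₃ e₄ hex₁ hex₂ hex₃ hex₄ hδ f₁ f₂ f₃ hfex₁ hfex₂
end
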